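/- arXiv:2508.03972 — 3 statements merged into one kernel-verified Lean document; each statement's English description precedes it below -/
import Mathlib

section
/- Let H be the complex vector space with basis {χ_k, η_k, χ̄_k, η̄_k : k ∈ ℤ}, Q the quadratic form on H whose associated polar form B satisfies B(χ_k, η_l) = k·δ_{k+l,0} = B(χ̄_k, η̄_l) and B = 0 on all other pairs of distinct basis vectors, with Q vanishing on each basis vector, and let A := CliffordAlgebra(Q) (so that in A one has χ_k η_l + η_l χ_k = k·δ_{k+l,0}, χ̄_k η̄_l + η̄_l χ̄_k = k·δ_{k+l,0}, and all other pairs of generators anticommute). Let J ⊆ A be the left ideal generated by {χ_k, η_k, χ̄_k, η̄_k : k > 0} ∪ {η₀ − η̄₀, χ₀ − χ̄₀}, let Fock := A/J as a left A-module, and ω := 1 + J. Then: for every left A-module V and every v ∈ V with v ≠ 0, χ_k v = η_k v = χ̄_k v = η̄_k v = 0 for all k > 0, (η₀ − η̄₀)v = 0, (χ₀ − χ̄₀)v = 0, and χ₀η₀v ≠ 0, there exists a unique A-module homomorphism φ : Fock → V with φ(ω) = v; moreover φ is injective, and hence φ is an isomorphism of A-modules between Fock and the cyclic submodule A·v of V.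 -/
/-!
The map `a + J ↦ a • v` is well defined because the generators of `J` kill `v`, and every `φ` with
`φ ω = v` is this map because `ω` generates `Fock`. What has to be shown is injectivity: the
annihilator of `v` lies in `J`.

Call the modes `χ_k, η_k, χ̄_k, η̄_k` with `k < 0`, together with `χ₀, η₀`, creation modes. They
pairwise anticommute and square to zero, so for a finite set `S` of them the product `c_S` is
defined up to sign. Modulo `J`, every element of `A` is a combination of the `c_S`: a positive
mode is anticommuted to the right until it hits `J`, and `χ̄₀, η̄₀` differ from `χ₀, η₀` by
elements of `J` that anticommute with every generator. So it remains to show that the vectors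
`c_S • v` are linearly independent. Given a relation, pick a term `T` whose negative part is
maximal and whose zero-mode part is then minimal. Apply the annihilators dual to the negative modes
of `T`, then the zero modes missing from `T`. This kills every other term and sends `c_T • v` to a
nonzero multiple of `χ₀ η₀ • v ≠ 0`.
-/

/-- The basis vectors of the space `H` spanned by `{χ_k, η_k, χ̄_k, η̄_k : k ∈ ℤ}`. The index
`(f, k)` records the family, `0 ↦ χ`, `1 ↦ η`, `2 ↦ χ̄`, `3 ↦ η̄`, and the mode `k`. -/
noncomputable def fockBasis (i : Fin 4 × ℤ) : (Fin 4 × ℤ) →₀ ℂ :=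
  Finsupp.single i 1

/-- The value of the polar form on pairs of basis vectors:
`B(χ_k, η_l) = k δ_{k+l,0} = B(χ̄_k, η̄_l)` (and symmetrically), all other pairs pairing
to zero. -/
def fockPolar (i j : Fin 4 × ℤ) : ℂ :=
  if i.1 = 0 ∧ j.1 = 1 ∧ i.2 + j.2 = 0 then (i.2 : ℂ)
  else if i.1 = 1 ∧ j.1 = 0 ∧ i.2 + j.2 = 0 then (j.2 : ℂ)
  else if i.1 = 2 ∧ j.1 = 3 ∧ i.2 + j.2 = 0 then (i.2 : ℂ)
  else if i.1 = 3 ∧ j.1 = 2 ∧ i.2 + j.2 = 0 then (j.2 : ℂ)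
  else 0

section Anticommuting

variable {A : Type*} [Ring A]

theorem List.Perm.prod_eq_neg_one_pow_mul {l l' : List A} (h : l.Perm l')
    (hl : ∀ x ∈ l, ∀ y ∈ l, x * y = -(y * x)) : ∃ n : ℕ, l.prod = (-1) ^ n * l'.prod := by
  induction h with
  | nil => exact ⟨0, by simp⟩
  | cons x _ ih =>
    obtain ⟨n, hn⟩ := ih fun a ha b hb => hl a (mem_cons_of_mem x ha) b (mem_cons_of_mem x hb)
    refine ⟨n, ?_⟩
    rw [prod_cons, prod_cons, hn, ← mul_assoc, ← mul_assoc,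
      ((Commute.neg_one_right x).pow_right n).eq]
  | swap x y l =>
    refine ⟨1, ?_⟩
    rw [prod_cons, prod_cons, prod_cons, prod_cons, ← mul_assoc, ← mul_assoc,
      hl y (by simp) x (by simp)]
    simp [mul_assoc]
  | trans h₁₂ _ ih₁₂ ih₂₃ =>
    obtain ⟨m, hm⟩ := ih₁₂ hl
    obtain ⟨n, hn⟩ := ih₂₃ fun a ha b hb => hl a (h₁₂.mem_iff.mpr ha) b (h₁₂.mem_iff.mpr hb)
    exact ⟨m + n, by rw [hm, hn, pow_add, mul_assoc]⟩

theorem List.mul_prod_eq_neg_one_pow_mul {x : A} :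
    ∀ {l : List A}, (∀ y ∈ l, x * y = -(y * x)) → x * l.prod = (-1) ^ l.length * (l.prod * x)
  | [], _ => by simp
  | y :: l, h => by
    rw [prod_cons, ← mul_assoc, h y mem_cons_self, neg_mul, mul_assoc,
      mul_prod_eq_neg_one_pow_mul fun z hz => h z (mem_cons_of_mem y hz), length_cons, pow_succ,
      ← mul_assoc y, ((Commute.neg_one_right y).pow_right _).eq]
    simp [mul_assoc]

theorem List.prod_eq_zero_of_not_nodup {l : List A} (hl : ∀ x ∈ l, ∀ y ∈ l, x * y = -(y * x))
    (hsq : ∀ x ∈ l, x * x = 0) (h : ¬l.Nodup) : l.prod = 0 := by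
  obtain ⟨a, ha⟩ : ∃ a, [a, a].Sublist l := by simpa [nodup_iff_sublist] using h
  obtain ⟨r, hr⟩ := ha.exists_perm_append
  obtain ⟨n, hn⟩ := hr.prod_eq_neg_one_pow_mul hl
  rw [hn, cons_append, cons_append, prod_cons, prod_cons, ← mul_assoc a,
    hsq a (ha.subset mem_cons_self), zero_mul, mul_zero]

theorem eq_neg_one_pow_mul_symm {x y : A} {n : ℕ} (h : x = (-1) ^ n * y) :
    y = (-1) ^ n * x := by
  rw [h, ← mul_assoc, ← pow_add, ← two_mul, pow_mul, neg_one_sq, one_pow, one_mul]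

theorem neg_one_pow_mul_smul {R V : Type*} [CommRing R] [Algebra R A] [AddCommGroup V]
    [Module A V] [Module R V] [IsScalarTower R A V] (n : ℕ) (x : A) (w : V) :
    ((-1 : A) ^ n * x) • w = ((-1 : R) ^ n) • x • w := by
  rw [mul_smul, show (-1 : A) ^ n = algebraMap R A ((-1) ^ n) by simp, algebraMap_smul]

theorem neg_one_pow_mul_mem {R A : Type*} [CommRing R] [Ring A] [Algebra R A]
    {p : Submodule R A} {x : A} (n : ℕ) (hx : x ∈ p) : (-1) ^ n * x ∈ p := by
  have h := p.smul_mem ((-1 : R) ^ n) hx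
  rwa [Algebra.smul_def, map_pow, map_neg, map_one] at h

def AnticommOn {ι : Type*} (f : ι → A) (s : Set ι) : Prop :=
  ∀ i ∈ s, ∀ j ∈ s, f i * f j = -(f j * f i)

theorem AnticommOn.map {ι : Type*} {f : ι → A} {s : Set ι} (hf : AnticommOn f s) {l : List ι}
    (hl : ∀ i ∈ l, i ∈ s) : ∀ x ∈ l.map f, ∀ y ∈ l.map f, x * y = -(y * x) := by
  simp only [List.mem_map]
  rintro _ ⟨i, hi, rfl⟩ _ ⟨j, hj, rfl⟩
  exact hf i (hl i hi) j (hl j hj)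

namespace Finset

variable {ι : Type*}

/-- Taken in the arbitrary order of `S.toList`: for anticommuting factors, any other order only
changes the sign. -/
noncomputable def anticommProd (S : Finset ι) (f : ι → A) : A := (S.toList.map f).prod

theorem anticommProd_empty (f : ι → A) : (∅ : Finset ι).anticommProd f = 1 := by
  simp [anticommProd]

theorem anticommProd_singleton (f : ι → A) (i : ι) : ({i} : Finset ι).anticommProd f = f i := by
  simp [anticommProd]

theorem mul_anticommProd {f : ι → A} {S : Finset ι} {x : A}
    (h : ∀ i ∈ S, x * f i = -(f i * x)) :
    x * S.anticommProd f = (-1) ^ S.card * (S.anticommProd f * x) := by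
  rw [anticommProd, List.mul_prod_eq_neg_one_pow_mul (by simpa using h), List.length_map,
    length_toList]

variable {f : ι → A} {s : Set ι} {S T : Finset ι}

theorem anticommProd_union [DecidableEq ι] (hf : AnticommOn f s) (hS : ↑S ⊆ s) (hT : ↑T ⊆ s)
    (hST : Disjoint S T) :
    ∃ n : ℕ, (S ∪ T).anticommProd f = (-1) ^ n * (S.anticommProd f * T.anticommProd f) := by
  have hperm : (S ∪ T).toList.Perm (S.toList ++ T.toList) :=
    List.perm_of_nodup_nodup_toFinset_eq (nodup_toList _)
      (List.nodup_append.mpr ⟨nodup_toList S, nodup_toList T, fun a ha b hb hab =>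
        disjoint_left.mp hST (mem_toList.mp ha) (hab ▸ mem_toList.mp hb)⟩) (by simp)
  rw [anticommProd, anticommProd, anticommProd, ← List.prod_append, ← List.map_append]
  exact (hperm.map f).prod_eq_neg_one_pow_mul
    (hf.map fun i hi => (coe_union S T ▸ Set.union_subset hS hT) (mem_toList.mp hi))

theorem anticommProd_mul_anticommProd_eq_zero (hf : AnticommOn f s)
    (hsq : ∀ i ∈ s, f i * f i = 0) (hS : ↑S ⊆ s) (hT : ↑T ⊆ s) (hST : ¬Disjoint S T) :
    S.anticommProd f * T.anticommProd f = 0 := by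
  have hs : ∀ i ∈ S.toList ++ T.toList, i ∈ s := by
    simp only [List.mem_append, mem_toList]
    rintro i (hi | hi)
    exacts [hS hi, hT hi]
  rw [anticommProd, anticommProd, ← List.prod_append, ← List.map_append]
  refine List.prod_eq_zero_of_not_nodup (hf.map hs) ?_ fun h => hST ?_
  · simp only [List.mem_map]
    rintro _ ⟨i, hi, rfl⟩
    exact hsq i (hs i hi)
  · obtain ⟨-, -, h⟩ := List.nodup_append.mp h.of_map
    exact disjoint_left.mpr fun a ha hb => h a (mem_toList.mpr ha) a (mem_toList.mpr hb) rfl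

end Finset

end Anticommuting

theorem Submodule.universal_of_ker_toSpanSingleton_eq {A V : Type*} [Ring A] [AddCommGroup V]
    [Module A V] {J : Submodule A A} {v : V}
    (hJ : LinearMap.ker (LinearMap.toSpanSingleton A V v) = J) :
    (∃! φ : (A ⧸ J) →ₗ[A] V, φ (Submodule.Quotient.mk 1) = v) ∧
      ∀ φ : (A ⧸ J) →ₗ[A] V, φ (Submodule.Quotient.mk 1) = v →
        Function.Injective φ ∧ LinearMap.range φ = Submodule.span A {v} := by
  set ψ := J.liftQ (LinearMap.toSpanSingleton A V v) hJ.ge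
  have hψ : ψ (Submodule.Quotient.mk 1) = v := one_smul A v
  have huniq : ∀ φ : (A ⧸ J) →ₗ[A] V, φ (Submodule.Quotient.mk 1) = v → φ = ψ := fun φ hφ =>
    J.linearMap_qext (LinearMap.ext_ring (hφ.trans hψ.symm))
  refine ⟨⟨ψ, hψ, huniq⟩, fun φ hφ => ?_⟩
  rw [huniq φ hφ]
  exact ⟨LinearMap.ker_eq_bot.mp (J.ker_liftQ_eq_bot _ _ hJ.le),
    by rw [J.range_liftQ, LinearMap.span_singleton_eq_range]⟩

namespace SymplecticFermion

def zeroModes : Finset (Fin 4 × ℤ) := {(0, 0), (1, 0)}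

def creation : Set (Fin 4 × ℤ) := {i | i.2 < 0 ∨ i ∈ zeroModes}

/-- `χ_k ↔ η_{-k}` and `χ̄_k ↔ η̄_{-k}`: the only index pairing nontrivially with `i`. -/
def dual (i : Fin 4 × ℤ) : Fin 4 × ℤ := (![1, 0, 3, 2] i.1, -i.2)

theorem dual_dual (i : Fin 4 × ℤ) : dual (dual i) = i := by
  obtain ⟨a, k⟩ := i
  fin_cases a <;> simp [dual]

theorem snd_eq_zero_of_mem_zeroModes {i : Fin 4 × ℤ} (h : i ∈ zeroModes) : i.2 = 0 := by
  simp only [zeroModes, Finset.mem_insert, Finset.mem_singleton] at h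
  rcases h with rfl | rfl <;> rfl

theorem snd_nonpos_of_mem_creation {i : Fin 4 × ℤ} (h : i ∈ creation) : i.2 ≤ 0 :=
  h.elim le_of_lt fun h => (snd_eq_zero_of_mem_zeroModes h).le

theorem fockPolar_eq_zero_of_ne_dual {i j : Fin 4 × ℤ} (h : j ≠ dual i) : fockPolar i j = 0 := by
  obtain ⟨a, k⟩ := i
  obtain ⟨b, l⟩ := j
  unfold fockPolar
  split_ifs with h₁ h₂ h₃ h₄ <;> try rfl
  all_goals
    obtain ⟨rfl, rfl, hkl⟩ := ‹_ ∧ _ ∧ _›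
    exact absurd (Prod.ext (by rfl) (by simp [dual]; omega)) h

theorem fockPolar_eq_zero_of_snd_eq_zero {i j : Fin 4 × ℤ} (h : i.2 = 0) : fockPolar i j = 0 := by
  obtain ⟨a, k⟩ := i
  obtain ⟨b, l⟩ := j
  simp only at h
  subst h
  unfold fockPolar
  split_ifs <;> simp_all

theorem fockPolar_dual_ne_zero {i : Fin 4 × ℤ} (h : i.2 ≠ 0) : fockPolar i (dual i) ≠ 0 := by
  obtain ⟨a, k⟩ := i
  fin_cases a <;> simp_all [fockPolar, dual]

theorem fockPolar_eq_zero_of_mem_creation {i j : Fin 4 × ℤ} (hi : i ∈ creation)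
    (hj : j ∈ creation) : fockPolar i j = 0 := by
  rcases hi with hi | hi
  · refine fockPolar_eq_zero_of_ne_dual fun h => ?_
    have := snd_nonpos_of_mem_creation hj
    rw [h, dual] at this
    simp only at this
    omega
  · exact fockPolar_eq_zero_of_snd_eq_zero (snd_eq_zero_of_mem_zeroModes hi)

variable {Q : QuadraticForm ℂ ((Fin 4 × ℤ) →₀ ℂ)}

variable (Q) in
noncomputable def gen (i : Fin 4 × ℤ) : CliffordAlgebra Q := CliffordAlgebra.ι Q (fockBasis i)

variable (Q) in
structure IsFockForm : Prop where
  apply_fockBasis (i : Fin 4 × ℤ) : Q (fockBasis i) = 0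
  polar_fockBasis (i j : Fin 4 × ℤ) :
    QuadraticMap.polar Q (fockBasis i) (fockBasis j) = fockPolar i j

namespace IsFockForm

variable (hQ : IsFockForm Q)
include hQ

theorem gen_mul_gen (i j : Fin 4 × ℤ) :
    gen Q i * gen Q j = algebraMap ℂ _ (fockPolar i j) - gen Q j * gen Q i := by
  rw [gen, gen, CliffordAlgebra.ι_mul_ι_comm, hQ.polar_fockBasis]

theorem gen_mul_gen_of_fockPolar_eq_zero {i j : Fin 4 × ℤ} (h : fockPolar i j = 0) :
    gen Q i * gen Q j = -(gen Q j * gen Q i) := by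
  rw [hQ.gen_mul_gen, h, map_zero, zero_sub]

theorem gen_mul_self (i : Fin 4 × ℤ) : gen Q i * gen Q i = 0 := by
  rw [gen, CliffordAlgebra.ι_sq_scalar, hQ.apply_fockBasis, map_zero]

theorem anticommOn_creation : AnticommOn (gen Q) creation := fun _ hi _ hj =>
  hQ.gen_mul_gen_of_fockPolar_eq_zero (fockPolar_eq_zero_of_mem_creation hi hj)

end IsFockForm

variable (Q) in
def fockRelations : Set (CliffordAlgebra Q) :=
  {x | ∃ f : Fin 4, ∃ k : ℤ, 0 < k ∧ x = CliffordAlgebra.ι Q (fockBasis (f, k))} ∪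
    {CliffordAlgebra.ι Q (fockBasis (1, 0)) - CliffordAlgebra.ι Q (fockBasis (3, 0)),
      CliffordAlgebra.ι Q (fockBasis (0, 0)) - CliffordAlgebra.ι Q (fockBasis (2, 0))}

variable (Q) in
noncomputable def creationSpan : Submodule ℂ (CliffordAlgebra Q) :=
  Submodule.span ℂ
    ((fun S : Finset (Fin 4 × ℤ) => S.anticommProd (gen Q)) '' {S | ↑S ⊆ creation})

theorem anticommProd_mem_creationSpan {S : Finset (Fin 4 × ℤ)} (hS : ↑S ⊆ creation) :
    S.anticommProd (gen Q) ∈ creationSpan Q :=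
  Submodule.subset_span ⟨S, hS, rfl⟩

theorem IsFockForm.gen_mul_mem_creationSpan (hQ : IsFockForm Q) {i : Fin 4 × ℤ}
    (hi : i ∈ creation) {S : Finset (Fin 4 × ℤ)} (hS : ↑S ⊆ creation) :
    gen Q i * S.anticommProd (gen Q) ∈ creationSpan Q := by
  have hi' : ↑({i} : Finset _) ⊆ creation := by simpa using hi
  rw [← Finset.anticommProd_singleton (gen Q) i]
  by_cases hiS : Disjoint {i} S
  · obtain ⟨n, hn⟩ := Finset.anticommProd_union hQ.anticommOn_creation hi' hS hiS
    rw [eq_neg_one_pow_mul_symm hn]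
    refine neg_one_pow_mul_mem n (anticommProd_mem_creationSpan ?_)
    rw [Finset.coe_union, Finset.coe_singleton, Set.singleton_union]
    exact Set.insert_subset hi hS
  · rw [Finset.anticommProd_mul_anticommProd_eq_zero hQ.anticommOn_creation
      (fun j _ => hQ.gen_mul_self j) hi' hS hiS]
    exact zero_mem _

section Spanning

variable {J : Submodule (CliffordAlgebra Q) (CliffordAlgebra Q)}

theorem mul_mem_sup_of_forall {x : CliffordAlgebra Q}
    (hx : ∀ S : Finset (Fin 4 × ℤ), ↑S ⊆ creation →
      x * S.anticommProd (gen Q) ∈ J.restrictScalars ℂ ⊔ creationSpan Q)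
    {w : CliffordAlgebra Q} (hw : w ∈ J.restrictScalars ℂ ⊔ creationSpan Q) :
    x * w ∈ J.restrictScalars ℂ ⊔ creationSpan Q := by
  have hspan : ∀ b ∈ creationSpan Q, x * b ∈ J.restrictScalars ℂ ⊔ creationSpan Q := by
    intro b hb
    induction hb using Submodule.span_induction with
    | mem _ h =>
      obtain ⟨S, hS, rfl⟩ := h
      exact hx S hS
    | zero => simp
    | add _ _ _ _ h₁ h₂ => rw [mul_add]; exact add_mem h₁ h₂
    | smul c _ _ h => rw [mul_smul_comm]; exact Submodule.smul_mem _ c h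
  obtain ⟨a, ha, b, hb, rfl⟩ := Submodule.mem_sup.mp hw
  rw [mul_add]
  exact add_mem (Submodule.mem_sup_left (J.smul_mem x ha)) (hspan b hb)

variable (hQ : IsFockForm Q)
include hQ

theorem IsFockForm.gen_mul_mem_sup_of_mem_creation {i : Fin 4 × ℤ} (hi : i ∈ creation)
    {w : CliffordAlgebra Q} (hw : w ∈ J.restrictScalars ℂ ⊔ creationSpan Q) :
    gen Q i * w ∈ J.restrictScalars ℂ ⊔ creationSpan Q :=
  mul_mem_sup_of_forall
    (fun _ hS => Submodule.mem_sup_right (hQ.gen_mul_mem_creationSpan hi hS)) hw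

theorem IsFockForm.gen_mul_anticommProd_mem_sup_of_pos (hJ : fockRelations Q ⊆ J)
    {i : Fin 4 × ℤ} (hi : 0 < i.2) {S : Finset (Fin 4 × ℤ)} (hS : ↑S ⊆ creation) :
    gen Q i * S.anticommProd (gen Q) ∈ J.restrictScalars ℂ ⊔ creationSpan Q := by
  induction S using Finset.induction_on with
  | empty =>
    rw [Finset.anticommProd_empty, mul_one]
    exact Submodule.mem_sup_left (hJ (Or.inl ⟨i.1, i.2, hi, rfl⟩))
  | insert j S hjS ih =>
    have hj : j ∈ creation := hS (by simp)
    have hS' : ↑S ⊆ creation := fun k hk => hS (by simp [hk])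
    obtain ⟨n, hn⟩ := Finset.anticommProd_union hQ.anticommOn_creation (by simpa using hj) hS'
      (Finset.disjoint_singleton_left.mpr hjS)
    rw [← Finset.insert_eq, Finset.anticommProd_singleton] at hn
    rw [hn, ← mul_assoc, ((Commute.neg_one_right _).pow_right n).eq, mul_assoc,
      ← mul_assoc (gen Q i), hQ.gen_mul_gen, sub_mul, Algebra.algebraMap_eq_smul_one,
      smul_one_mul]
    refine neg_one_pow_mul_mem n (sub_mem (Submodule.mem_sup_right ?_) ?_)
    · exact Submodule.smul_mem _ _ (anticommProd_mem_creationSpan hS')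
    · rw [mul_assoc]
      exact hQ.gen_mul_mem_sup_of_mem_creation hj (ih hS')

theorem IsFockForm.gen_mul_anticommProd_mem_sup_of_sub_mem {i i' : Fin 4 × ℤ} (hi : i.2 = 0)
    (hi' : i' ∈ zeroModes) (hd : gen Q i' - gen Q i ∈ J) {S : Finset (Fin 4 × ℤ)}
    (hS : ↑S ⊆ creation) :
    gen Q i * S.anticommProd (gen Q) ∈ J.restrictScalars ℂ ⊔ creationSpan Q := by
  have hdS : (gen Q i' - gen Q i) * S.anticommProd (gen Q) ∈ J := by
    rw [Finset.mul_anticommProd fun j _ => ?_]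
    · exact J.smul_mem _ (J.smul_mem _ hd)
    rw [sub_mul, mul_sub,
      hQ.gen_mul_gen_of_fockPolar_eq_zero (fockPolar_eq_zero_of_snd_eq_zero hi),
      hQ.gen_mul_gen_of_fockPolar_eq_zero
        (fockPolar_eq_zero_of_snd_eq_zero (snd_eq_zero_of_mem_zeroModes hi'))]
    abel
  rw [show gen Q i = gen Q i' - (gen Q i' - gen Q i) by abel, sub_mul]
  exact sub_mem (Submodule.mem_sup_right (hQ.gen_mul_mem_creationSpan (Or.inr hi') hS))
    (Submodule.mem_sup_left hdS)

theorem IsFockForm.gen_mul_mem_sup (hJ : fockRelations Q ⊆ J) (i : Fin 4 × ℤ)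
    {w : CliffordAlgebra Q} (hw : w ∈ J.restrictScalars ℂ ⊔ creationSpan Q) :
    gen Q i * w ∈ J.restrictScalars ℂ ⊔ creationSpan Q := by
  obtain ⟨f, k⟩ := i
  rcases lt_trichotomy k 0 with hk | rfl | hk
  · exact hQ.gen_mul_mem_sup_of_mem_creation (Or.inl hk) hw
  · refine mul_mem_sup_of_forall (fun S hS => ?_) hw
    fin_cases f
    · exact Submodule.mem_sup_right
        (hQ.gen_mul_mem_creationSpan (Or.inr (by simp [zeroModes])) hS)
    · exact Submodule.mem_sup_right
        (hQ.gen_mul_mem_creationSpan (Or.inr (by simp [zeroModes])) hS)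
    · exact hQ.gen_mul_anticommProd_mem_sup_of_sub_mem (i' := (0, 0)) rfl (by simp [zeroModes])
        (hJ (Or.inr (by simp [gen]))) hS
    · exact hQ.gen_mul_anticommProd_mem_sup_of_sub_mem (i' := (1, 0)) rfl (by simp [zeroModes])
        (hJ (Or.inr (by simp [gen]))) hS
  · exact mul_mem_sup_of_forall (fun S hS => hQ.gen_mul_anticommProd_mem_sup_of_pos hJ hk hS) hw

theorem IsFockForm.sup_creationSpan_eq_top (hJ : fockRelations Q ⊆ J) :
    J.restrictScalars ℂ ⊔ creationSpan Q = ⊤ := by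
  refine Submodule.eq_top_iff'.mpr fun a => ?_
  induction a using CliffordAlgebra.left_induction with
  | algebraMap r =>
    rw [Algebra.algebraMap_eq_smul_one, ← Finset.anticommProd_empty (gen Q)]
    exact Submodule.smul_mem _ r
      (Submodule.mem_sup_right (anticommProd_mem_creationSpan (by simp)))
  | add x y hx hy => exact add_mem hx hy
  | ι_mul x m hx =>
    induction m using Finsupp.induction_linear with
    | zero => simp
    | add m m' hm hm' => rw [map_add, add_mul]; exact add_mem hm hm'
    | single i c =>
      rw [← Finsupp.smul_single_one, map_smul, smul_mul_assoc]
      exact Submodule.smul_mem _ c (hQ.gen_mul_mem_sup hJ i hx)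

end Spanning

variable (Q) in
noncomputable def annihilatorProd (P : List (Fin 4 × ℤ)) : CliffordAlgebra Q :=
  (P.map fun q => gen Q (dual q)).prod

def negPart (S : Finset (Fin 4 × ℤ)) : Finset (Fin 4 × ℤ) := S.filter (·.2 < 0)

def partKey (S : Finset (Fin 4 × ℤ)) : (Finset (Fin 4 × ℤ))ᵒᵈ × Finset (Fin 4 × ℤ) :=
  (OrderDual.toDual (negPart S), S ∩ zeroModes)

theorem eq_of_partKey_eq {S T : Finset (Fin 4 × ℤ)} (hS : ↑S ⊆ creation) (hT : ↑T ⊆ creation)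
    (h : partKey S = partKey T) : S = T := by
  have hparts : ∀ U : Finset (Fin 4 × ℤ), ↑U ⊆ creation →
      ∀ i, i ∈ U ↔ i ∈ negPart U ∨ i ∈ U ∩ zeroModes := by
    intro U hU i
    simp only [negPart, Finset.mem_filter, Finset.mem_inter]
    exact ⟨fun hi => (hU hi).imp (⟨hi, ·⟩) (⟨hi, ·⟩), by rintro (⟨hi, -⟩ | ⟨hi, -⟩) <;> exact hi⟩
  simp only [partKey, Prod.mk.injEq, OrderDual.toDual_inj] at h
  ext i
  rw [hparts S hS, hparts T hT, h.1, h.2]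

variable (Q) in
noncomputable def coeffOp (T : Finset (Fin 4 × ℤ)) : CliffordAlgebra Q :=
  (zeroModes \ T).anticommProd (gen Q) * annihilatorProd Q (negPart T).toList

section Action

variable {V : Type*} [AddCommGroup V] [Module (CliffordAlgebra Q) V] {v : V} (hQ : IsFockForm Q)
include hQ

theorem IsFockForm.gen_smul_anticommProd_smul_of_dual_notMem {i : Fin 4 × ℤ}
    (hiv : gen Q i • v = 0) {S : Finset (Fin 4 × ℤ)} (h : dual i ∉ S) :
    gen Q i • S.anticommProd (gen Q) • v = 0 := by
  have hanti : ∀ j ∈ S, gen Q i * gen Q j = -(gen Q j * gen Q i) := fun j hj =>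
    hQ.gen_mul_gen_of_fockPolar_eq_zero (fockPolar_eq_zero_of_ne_dual (ne_of_mem_of_not_mem hj h))
  rw [← mul_smul, Finset.mul_anticommProd hanti, mul_smul, mul_smul, hiv, smul_zero, smul_zero]

variable [Module ℂ V] [IsScalarTower ℂ (CliffordAlgebra Q) V]

theorem IsFockForm.gen_smul_anticommProd_smul_of_dual_mem {i : Fin 4 × ℤ} (hi : i.2 ≠ 0)
    (hiv : gen Q i • v = 0) {S : Finset (Fin 4 × ℤ)} (hS : ↑S ⊆ creation) (h : dual i ∈ S) :
    ∃ c : ℂ, c ≠ 0 ∧ gen Q i • S.anticommProd (gen Q) • v =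
      c • (S.erase (dual i)).anticommProd (gen Q) • v := by
  obtain ⟨n, hn⟩ := Finset.anticommProd_union hQ.anticommOn_creation (by simpa using hS h)
    (fun j hj => hS (Finset.mem_of_mem_erase hj))
    (Finset.disjoint_singleton_left.mpr (Finset.notMem_erase _ _))
  rw [← Finset.insert_eq, Finset.insert_erase h, Finset.anticommProd_singleton] at hn
  refine ⟨(-1) ^ n * fockPolar i (dual i), mul_ne_zero (by simp) (fockPolar_dual_ne_zero hi), ?_⟩
  rw [hn, neg_one_pow_mul_smul (R := ℂ), smul_comm, ← mul_smul, ← mul_assoc, hQ.gen_mul_gen,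
    sub_mul, sub_smul, mul_assoc, mul_smul (gen Q (dual i)), mul_smul (gen Q i),
    hQ.gen_smul_anticommProd_smul_of_dual_notMem hiv (Finset.notMem_erase _ _), smul_zero,
    sub_zero, mul_smul, algebraMap_smul, smul_smul]

variable (hv : ∀ i : Fin 4 × ℤ, 0 < i.2 → gen Q i • v = 0)
include hv

theorem IsFockForm.annihilatorProd_smul_of_subset {P : List (Fin 4 × ℤ)} (hP : ∀ q ∈ P, q.2 < 0)
    (hPn : P.Nodup) {S : Finset (Fin 4 × ℤ)} (hS : ↑S ⊆ creation) (hPS : P.toFinset ⊆ S) :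
    ∃ c : ℂ, c ≠ 0 ∧ annihilatorProd Q P • S.anticommProd (gen Q) • v =
      c • (S \ P.toFinset).anticommProd (gen Q) • v := by
  induction P with
  | nil => exact ⟨1, one_ne_zero, by simp [annihilatorProd]⟩
  | cons q P ih =>
    obtain ⟨hqP, hPn⟩ := List.nodup_cons.mp hPn
    obtain ⟨c, hc, hcv⟩ := ih (fun r hr => hP r (List.mem_cons_of_mem q hr)) hPn
      (by rw [List.toFinset_cons] at hPS; exact (Finset.subset_insert _ _).trans hPS)
    have hq : 0 < (dual q).2 := by simpa [dual] using hP q List.mem_cons_self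
    obtain ⟨c', hc', hc'v⟩ := hQ.gen_smul_anticommProd_smul_of_dual_mem hq.ne' (hv _ hq)
      (S := S \ P.toFinset) (fun j hj => hS (Finset.mem_sdiff.mp hj).1)
      (by rw [dual_dual]; exact Finset.mem_sdiff.mpr ⟨hPS (by simp), by simpa using hqP⟩)
    refine ⟨c * c', mul_ne_zero hc hc', ?_⟩
    rw [annihilatorProd, List.map_cons, List.prod_cons, mul_smul, ← annihilatorProd, hcv,
      smul_comm, hc'v, dual_dual, smul_smul, List.toFinset_cons, Finset.sdiff_insert]

theorem IsFockForm.annihilatorProd_smul_of_not_subset {P : List (Fin 4 × ℤ)}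
    (hP : ∀ q ∈ P, q.2 < 0) (hPn : P.Nodup) {S : Finset (Fin 4 × ℤ)} (hS : ↑S ⊆ creation)
    (hPS : ¬P.toFinset ⊆ S) : annihilatorProd Q P • S.anticommProd (gen Q) • v = 0 := by
  induction P with
  | nil => simp at hPS
  | cons q P ih =>
    obtain ⟨hqP, hPn⟩ := List.nodup_cons.mp hPn
    have hP' : ∀ r ∈ P, r.2 < 0 := fun r hr => hP r (List.mem_cons_of_mem q hr)
    rw [annihilatorProd, List.map_cons, List.prod_cons, mul_smul, ← annihilatorProd]
    by_cases hPS' : P.toFinset ⊆ S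
    · have hqS : q ∉ S := fun hqS => hPS (by simpa [Finset.insert_subset_iff] using ⟨hqS, hPS'⟩)
      obtain ⟨c, -, hcv⟩ := hQ.annihilatorProd_smul_of_subset hv hP' hPn hS hPS'
      have hq : 0 < (dual q).2 := by simpa [dual] using hP q List.mem_cons_self
      rw [hcv, smul_comm, hQ.gen_smul_anticommProd_smul_of_dual_notMem (hv _ hq)
        (by rw [dual_dual]; exact fun h => hqS (Finset.mem_sdiff.mp h).1), smul_zero]
    · rw [ih hP' hPn hPS', smul_zero]

theorem IsFockForm.coeffOp_smul_eq_zero {S T : Finset (Fin 4 × ℤ)} (hS : ↑S ⊆ creation)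
    (h : ¬partKey S ≤ partKey T) : coeffOp Q T • S.anticommProd (gen Q) • v = 0 := by
  have hneg : ∀ q ∈ (negPart T).toList, q.2 < 0 := by simp [negPart]
  rw [coeffOp, mul_smul]
  by_cases hsub : negPart T ⊆ S
  · obtain ⟨c, -, hcv⟩ := hQ.annihilatorProd_smul_of_subset hv hneg (Finset.nodup_toList _) hS
      (by rwa [Finset.toList_toFinset])
    rw [Finset.toList_toFinset] at hcv
    have hzero : ¬S ∩ zeroModes ⊆ T ∩ zeroModes := fun hZ => h <| Prod.mk_le_mk.mpr
      ⟨OrderDual.toDual_le_toDual.mpr fun i hi =>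
        Finset.mem_filter.mpr ⟨hsub hi, (Finset.mem_filter.mp hi).2⟩, hZ⟩
    obtain ⟨z, hzSZ, hzTZ⟩ := Finset.not_subset.mp hzero
    obtain ⟨hzS, hzZ⟩ := Finset.mem_inter.mp hzSZ
    have hzT : z ∉ T := fun hzT => hzTZ (Finset.mem_inter.mpr ⟨hzT, hzZ⟩)
    rw [hcv, smul_comm, ← mul_smul, Finset.anticommProd_mul_anticommProd_eq_zero
      hQ.anticommOn_creation (fun j _ => hQ.gen_mul_self j)
      (fun j hj => Or.inr (Finset.mem_sdiff.mp hj).1)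
      (fun j hj => hS (Finset.mem_sdiff.mp hj).1), zero_smul, smul_zero]
    refine Finset.not_disjoint_iff.mpr ⟨z, Finset.mem_sdiff.mpr ⟨hzZ, hzT⟩,
      Finset.mem_sdiff.mpr ⟨hzS, fun hz => ?_⟩⟩
    have := (Finset.mem_filter.mp hz).2
    rw [snd_eq_zero_of_mem_zeroModes hzZ] at this
    exact lt_irrefl 0 this
  · rw [hQ.annihilatorProd_smul_of_not_subset hv hneg (Finset.nodup_toList _) hS
      (by rwa [Finset.toList_toFinset]), smul_zero]

theorem IsFockForm.coeffOp_smul_self {T : Finset (Fin 4 × ℤ)} (hT : ↑T ⊆ creation) :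
    ∃ c : ℂ, c ≠ 0 ∧
      coeffOp Q T • T.anticommProd (gen Q) • v = c • (gen Q (0, 0) * gen Q (1, 0)) • v := by
  obtain ⟨c, hc, hcv⟩ := hQ.annihilatorProd_smul_of_subset hv (P := (negPart T).toList)
    (by simp [negPart]) (Finset.nodup_toList _) hT
    (by rw [Finset.toList_toFinset]; exact Finset.filter_subset _ _)
  have hzeroPart : T \ (negPart T).toList.toFinset = T ∩ zeroModes := by
    ext i
    simp only [Finset.toList_toFinset, negPart, Finset.mem_sdiff, Finset.mem_filter,
      Finset.mem_inter, not_and, not_lt]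
    exact ⟨fun ⟨hi, hi0⟩ => ⟨hi, ((hT hi).resolve_left (hi0 hi).not_gt)⟩,
      fun ⟨hi, hiZ⟩ => ⟨hi, fun _ => (snd_eq_zero_of_mem_zeroModes hiZ).ge⟩⟩
  have hZ : ↑zeroModes ⊆ creation := fun i hi => Or.inr hi
  obtain ⟨m, hm⟩ := Finset.anticommProd_union hQ.anticommOn_creation
    (S := zeroModes \ T) (T := T ∩ zeroModes)
    ((Finset.coe_subset.mpr Finset.sdiff_subset).trans hZ)
    ((Finset.coe_subset.mpr Finset.inter_subset_right).trans hZ)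
    (Finset.disjoint_left.mpr fun i hi hi' =>
      (Finset.mem_sdiff.mp hi).2 (Finset.mem_inter.mp hi').1)
  obtain ⟨k, hk⟩ := Finset.anticommProd_union hQ.anticommOn_creation
    (S := {(0, 0)}) (T := {(1, 0)})
    (by rw [Finset.coe_singleton, Set.singleton_subset_iff]; exact hZ (by simp [zeroModes]))
    (by rw [Finset.coe_singleton, Set.singleton_subset_iff]; exact hZ (by simp [zeroModes]))
    (by simp)
  rw [Finset.inter_comm, Finset.sdiff_union_inter] at hm
  rw [← Finset.insert_eq, Finset.anticommProd_singleton, Finset.anticommProd_singleton] at hk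
  change zeroModes.anticommProd (gen Q) = _ at hk
  refine ⟨(-1) ^ (m + k) * c, mul_ne_zero (by simp) hc, ?_⟩
  rw [coeffOp, mul_smul, hcv, hzeroPart, smul_comm, ← mul_smul, Finset.inter_comm,
    eq_neg_one_pow_mul_symm hm, hk, ← mul_assoc, ← pow_add,
    neg_one_pow_mul_smul (R := ℂ), smul_smul, mul_comm]

theorem IsFockForm.eq_zero_of_mem_creationSpan (hne : (gen Q (0, 0) * gen Q (1, 0)) • v ≠ 0)
    {n : CliffordAlgebra Q} (hn : n ∈ creationSpan Q) (hnv : n • v = 0) : n = 0 := by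
  obtain ⟨l, hl, rfl⟩ := (Finsupp.mem_span_image_iff_linearCombination ℂ).mp hn
  have hcre : ∀ S ∈ l.support, ↑S ⊆ creation := fun S hS => hl hS
  by_contra hl0
  obtain ⟨T, hT, hTmin⟩ := l.support.exists_minimalFor partKey
    (Finsupp.support_nonempty_iff.mpr (by rintro rfl; simp at hl0))
  obtain ⟨c, hc, hcv⟩ := hQ.coeffOp_smul_self hv (hcre T hT)
  have hextract : coeffOp Q T • (Finsupp.linearCombination ℂ
      (fun S : Finset (Fin 4 × ℤ) => S.anticommProd (gen Q)) l) • v =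
        l T • c • (gen Q (0, 0) * gen Q (1, 0)) • v := by
    rw [Finsupp.linearCombination_apply, Finsupp.sum, Finset.sum_smul, Finset.smul_sum,
      Finset.sum_eq_single T (fun S hS hST => ?_) (fun hT' => absurd hT hT'), smul_assoc,
      smul_comm, hcv]
    rw [smul_assoc, smul_comm, hQ.coeffOp_smul_eq_zero hv (hcre S hS)
      (fun hle => hST (eq_of_partKey_eq (hcre S hS) (hcre T hT)
        (le_antisymm hle (hTmin hS hle)))), smul_zero]
  rw [hnv, smul_zero] at hextract
  exact hne ((smul_eq_zero.mp ((smul_eq_zero.mp hextract.symm).resolve_left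
    (Finsupp.mem_support_iff.mp hT))).resolve_left hc)

end Action

theorem IsFockForm.ker_toSpanSingleton_eq {V : Type*} [AddCommGroup V]
    [Module (CliffordAlgebra Q) V] [Module ℂ V] [IsScalarTower ℂ (CliffordAlgebra Q) V] {v : V}
    (hQ : IsFockForm Q) (hrel : ∀ x ∈ fockRelations Q, x • v = 0)
    (hne : (gen Q (0, 0) * gen Q (1, 0)) • v ≠ 0) :
    LinearMap.ker (LinearMap.toSpanSingleton (CliffordAlgebra Q) V v) =
      Submodule.span (CliffordAlgebra Q) (fockRelations Q) := by
  have hv : ∀ i : Fin 4 × ℤ, 0 < i.2 → gen Q i • v = 0 := fun i hi =>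
    hrel _ (Or.inl ⟨i.1, i.2, hi, rfl⟩)
  have hJv : Submodule.span (CliffordAlgebra Q) (fockRelations Q) ≤
      LinearMap.ker (LinearMap.toSpanSingleton (CliffordAlgebra Q) V v) :=
    Submodule.span_le.mpr hrel
  refine le_antisymm (fun a ha => ?_) hJv
  obtain ⟨x, hx, n, hn, rfl⟩ := Submodule.mem_sup.mp
    ((hQ.sup_creationSpan_eq_top Submodule.subset_span).ge (Submodule.mem_top (x := a)))
  rw [LinearMap.mem_ker, LinearMap.toSpanSingleton_apply, add_smul,
    show x • v = 0 from hJv hx, zero_add] at ha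
  rw [hQ.eq_zero_of_mem_creationSpan hv hne hn ha, add_zero]
  exact hx

end SymplecticFermion

theorem fock_module_universal_property_general
    (Q : QuadraticForm ℂ ((Fin 4 × ℤ) →₀ ℂ))
    (hQ0 : ∀ i : Fin 4 × ℤ, Q (fockBasis i) = 0)
    (hpolar : ∀ i j : Fin 4 × ℤ,
      QuadraticMap.polar (⇑Q) (fockBasis i) (fockBasis j) = fockPolar i j)
    (J : Submodule (CliffordAlgebra Q) (CliffordAlgebra Q))
    (hJ : J = Submodule.span (CliffordAlgebra Q)
      ({x | ∃ f : Fin 4, ∃ k : ℤ, 0 < k ∧ x = CliffordAlgebra.ι Q (fockBasis (f, k))} ∪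
        {CliffordAlgebra.ι Q (fockBasis (1, 0)) - CliffordAlgebra.ι Q (fockBasis (3, 0)),
          CliffordAlgebra.ι Q (fockBasis (0, 0)) - CliffordAlgebra.ι Q (fockBasis (2, 0))}))
    (V : Type) [AddCommGroup V] [Module (CliffordAlgebra Q) V]
    (v : V)
    (hann : ∀ f : Fin 4, ∀ k : ℤ, 0 < k →
      CliffordAlgebra.ι Q (fockBasis (f, k)) • v = 0)
    (heta : (CliffordAlgebra.ι Q (fockBasis (1, 0))
        - CliffordAlgebra.ι Q (fockBasis (3, 0))) • v = 0)
    (hchi : (CliffordAlgebra.ι Q (fockBasis (0, 0))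
        - CliffordAlgebra.ι Q (fockBasis (2, 0))) • v = 0)
    (hne : (CliffordAlgebra.ι Q (fockBasis (0, 0))
        * CliffordAlgebra.ι Q (fockBasis (1, 0))) • v ≠ 0) :
    (∃! φ : (CliffordAlgebra Q ⧸ J) →ₗ[CliffordAlgebra Q] V,
        φ (Submodule.Quotient.mk (1 : CliffordAlgebra Q)) = v) ∧
      ∀ φ : (CliffordAlgebra Q ⧸ J) →ₗ[CliffordAlgebra Q] V,
        φ (Submodule.Quotient.mk (1 : CliffordAlgebra Q)) = v →
          Function.Injective φ ∧
            LinearMap.range φ = Submodule.span (CliffordAlgebra Q) {v} := by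
  let : Module ℂ V := Module.compHom V (algebraMap ℂ (CliffordAlgebra Q))
  have : IsScalarTower ℂ (CliffordAlgebra Q) V :=
    ⟨fun c a w => by rw [Algebra.smul_def, mul_smul]; rfl⟩
  have hrel : ∀ x ∈ SymplecticFermion.fockRelations Q, x • v = 0 := by
    rintro _ (⟨f, k, hk, rfl⟩ | rfl | rfl)
    exacts [hann f k hk, heta, hchi]
  refine Submodule.universal_of_ker_toSpanSingleton_eq ?_
  rw [hJ]
  exact SymplecticFermion.IsFockForm.ker_toSpanSingleton_eq ⟨hQ0, hpolar⟩ hrel hne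

/-- Let `Q` be the quadratic form on `H` vanishing on the basis vectors and
with polar form `fockPolar`, `A := CliffordAlgebra Q`, `J` the left ideal generated by
`{χ_k, η_k, χ̄_k, η̄_k : k > 0} ∪ {η₀ − η̄₀, χ₀ − χ̄₀}`, `Fock := A ⧸ J` and `ω := 1 + J`.
Then for every left `A`-module `V` and every `v ≠ 0` annihilated by the positive modes and
by `η₀ − η̄₀` and `χ₀ − χ̄₀`, with `χ₀ η₀ v ≠ 0`, there is a unique `A`-module map
`φ : Fock → V` with `φ ω = v`; moreover any such `φ` is injective with range the cyclic
submodule `A·v`, i.e. `φ` is an isomorphism onto `A·v`. -/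
theorem fock_module_universal_property
    (Q : QuadraticForm ℂ ((Fin 4 × ℤ) →₀ ℂ))
    (hQ0 : ∀ i : Fin 4 × ℤ, Q (fockBasis i) = 0)
    (hpolar : ∀ i j : Fin 4 × ℤ,
      QuadraticMap.polar (⇑Q) (fockBasis i) (fockBasis j) = fockPolar i j)
    (J : Submodule (CliffordAlgebra Q) (CliffordAlgebra Q))
    (hJ : J = Submodule.span (CliffordAlgebra Q)
      ({x | ∃ f : Fin 4, ∃ k : ℤ, 0 < k ∧ x = CliffordAlgebra.ι Q (fockBasis (f, k))} ∪
        {CliffordAlgebra.ι Q (fockBasis (1, 0)) - CliffordAlgebra.ι Q (fockBasis (3, 0)),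
          CliffordAlgebra.ι Q (fockBasis (0, 0)) - CliffordAlgebra.ι Q (fockBasis (2, 0))}))
    (V : Type) [AddCommGroup V] [Module (CliffordAlgebra Q) V]
    (v : V) (hv : v ≠ 0)
    (hann : ∀ f : Fin 4, ∀ k : ℤ, 0 < k →
      CliffordAlgebra.ι Q (fockBasis (f, k)) • v = 0)
    (heta : (CliffordAlgebra.ι Q (fockBasis (1, 0))
        - CliffordAlgebra.ι Q (fockBasis (3, 0))) • v = 0)
    (hchi : (CliffordAlgebra.ι Q (fockBasis (0, 0))
        - CliffordAlgebra.ι Q (fockBasis (2, 0))) • v = 0)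
    (hne : (CliffordAlgebra.ι Q (fockBasis (0, 0))
        * CliffordAlgebra.ι Q (fockBasis (1, 0))) • v ≠ 0) :
    (∃! φ : (CliffordAlgebra Q ⧸ J) →ₗ[CliffordAlgebra Q] V,
        φ (Submodule.Quotient.mk (1 : CliffordAlgebra Q)) = v) ∧
      ∀ φ : (CliffordAlgebra Q ⧸ J) →ₗ[CliffordAlgebra Q] V,
        φ (Submodule.Quotient.mk (1 : CliffordAlgebra Q)) = v →
          Function.Injective φ ∧
            LinearMap.range φ = Submodule.span (CliffordAlgebra Q) {v} :=
  fock_module_universal_property_general Q hQ0 hpolar J hJ V v hann heta hchi hne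
end

section
/- Let a : ℤ² → ℂ be finitely supported. Then the following are equivalent: (i) there exists a finitely supported α : ℤ² → ℂ with a = Δ_♯ α; (ii) there exists R > 0 such that the support of a is contained in {u ∈ ℤ² : |u| ≤ R} and, for every z ∈ ℤ², every finite D ⊂ ℤ² containing {z + u : u ∈ ℤ², |u| ≤ R}, and every w ∈ D with |w − z| > R, one has Σ_{u ∈ ℤ²} a(u)·G_D(z + u, w) = 0. (This is the characterization of null linear local fields of the fermionic discrete Gaussian free field: the linear field Σ_u a(u) ξ(u) is a null field if and only if it lies in the span of the discrete Laplacians Δ_♯ ξ(u), and likewise for θ.) -/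
/-- Two vertices of `ℤ²` are neighbours iff their Euclidean distance is `1`. -/
def LatticeAdj (u v : ℤ × ℤ) : Prop :=
  (u.1 - v.1) ^ 2 + (u.2 - v.2) ^ 2 = 1

instance : DecidableRel LatticeAdj := fun u v => by unfold LatticeAdj; infer_instance

/-- The full-plane discrete Laplacian on `ℤ²`:
`Δ f (u) = Σ_{v ∼ u} (f v − f u)` (sum over the four nearest neighbours). -/
def fullLap (f : ℤ × ℤ → ℂ) (u : ℤ × ℤ) : ℂ :=
  f (u.1 + 1, u.2) + f (u.1 - 1, u.2) + f (u.1, u.2 + 1) + f (u.1, u.2 - 1) - 4 * f u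

/-- The Dirichlet Laplacian matrix of a finite set `D ⊂ ℤ²`:
`(Δ^D f)(x) = Σ_{y ∼ x, y ∈ D} f y − 4 f x`. -/
def dirichletLapMatrix (D : Finset (ℤ × ℤ)) : Matrix D D ℂ :=
  Matrix.of fun x y =>
    (if LatticeAdj (x : ℤ × ℤ) (y : ℤ × ℤ) then (1 : ℂ) else 0) - (if x = y then 4 else 0)

/-- The Dirichlet Green's function `G_D := −(Δ^D)⁻¹` of a finite set `D ⊂ ℤ²`, with the
convention `G_D(x,y) = 0` whenever `x ∉ D` or `y ∉ D`. -/
noncomputable def dirichletGreen (D : Finset (ℤ × ℤ)) (x y : ℤ × ℤ) : ℂ :=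
  if hx : x ∈ D then
    if hy : y ∈ D then (-(dirichletLapMatrix D)⁻¹) ⟨x, hx⟩ ⟨y, hy⟩ else 0
  else 0

/-- The Euclidean norm of a lattice point. -/
noncomputable def latticeNorm (u : ℤ × ℤ) : ℝ :=
  Real.sqrt ((u.1 : ℝ) ^ 2 + (u.2 : ℝ) ^ 2)

/-!
For (i) ⇒ (ii), summation by parts moves the Laplacian from `α` onto `x ↦ G_D(x, w)`, whose
Laplacian on `D` is `-δ_w`; this vanishes on the translate `z + supp α`, which lies in `D` and
avoids `w` once `R` exceeds the radius of `supp α`.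

For (ii) ⇒ (i), take a box `D` containing the ball of radius `R + 1` and the Green potential
`α = -Σ_u a(u) G_D(u, ·)`, which satisfies `Δ_♯ α = a` on `D`. Condition (ii) at `z = 0` says
that `α` vanishes outside the ball of radius `R`, hence `Δ_♯ α` vanishes outside `D`, as `a` does.

Invertibility of `Δ^D` is the maximum principle: a function vanishing off `D` and harmonic on `D`
vanishes identically.
-/

open Finset Function Matrix

lemma latticeAdj_comm {u v : ℤ × ℤ} : LatticeAdj u v ↔ LatticeAdj v u := by
  unfold LatticeAdj; constructor <;> intro h <;> linarith

lemma latticeAdj_iff (x y : ℤ × ℤ) :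
    LatticeAdj x y ↔
      y ∈ ({(x.1 + 1, x.2), (x.1 - 1, x.2), (x.1, x.2 + 1), (x.1, x.2 - 1)} : Finset (ℤ × ℤ)) := by
  obtain ⟨x1, x2⟩ := x
  obtain ⟨y1, y2⟩ := y
  simp only [LatticeAdj, mem_insert, mem_singleton, Prod.mk.injEq]
  constructor
  · intro h
    have : x1 - y1 ≤ 1 := by nlinarith [sq_nonneg (x2 - y2), sq_nonneg (x1 - y1 - 1)]
    have : -1 ≤ x1 - y1 := by nlinarith [sq_nonneg (x2 - y2), sq_nonneg (x1 - y1 + 1)]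
    have : x2 - y2 ≤ 1 := by nlinarith [sq_nonneg (x1 - y1), sq_nonneg (x2 - y2 - 1)]
    have : -1 ≤ x2 - y2 := by nlinarith [sq_nonneg (x1 - y1), sq_nonneg (x2 - y2 + 1)]
    obtain ⟨d1, rfl⟩ : ∃ d, x1 = y1 + d := ⟨x1 - y1, by ring⟩
    obtain ⟨d2, rfl⟩ : ∃ d, x2 = y2 + d := ⟨x2 - y2, by ring⟩
    simp only [add_sub_cancel_left] at *
    interval_cases d1 <;> interval_cases d2 <;> omega
  · rintro (⟨rfl, rfl⟩ | ⟨rfl, rfl⟩ | ⟨rfl, rfl⟩ | ⟨rfl, rfl⟩) <;> ring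

lemma sum_ite_latticeAdj {M : Type*} [AddCommMonoid M] {D : Finset (ℤ × ℤ)} {f : ℤ × ℤ → M}
    (hf : ∀ p ∉ D, f p = 0) (x : ℤ × ℤ) :
    ∑ y ∈ D, (if LatticeAdj x y then f y else 0) =
      f (x.1 + 1, x.2) + f (x.1 - 1, x.2) + f (x.1, x.2 + 1) + f (x.1, x.2 - 1) := by
  simp_rw [latticeAdj_iff, ← sum_filter, filter_mem_eq_inter]
  rw [sum_subset inter_subset_right fun p _ hp => hf p fun h => hp (mem_inter.2 ⟨h, ‹_›⟩)]
  rw [sum_insert, sum_insert, sum_insert, sum_singleton]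
  · abel
  all_goals simp only [mem_insert, mem_singleton, Prod.ext_iff, not_or]; omega

lemma fullLap_eq_shifts (f : ℤ × ℤ → ℂ) (u : ℤ × ℤ) :
    fullLap f u = f (u + (1, 0)) + f (u - (1, 0)) + f (u + (0, 1)) + f (u - (0, 1)) - 4 * f u := by
  obtain ⟨u1, u2⟩ := u
  simp [fullLap, sub_eq_add_neg]

lemma fullLap_comp_add_left (f : ℤ × ℤ → ℂ) (z u : ℤ × ℤ) :
    fullLap (fun p => f (z + p)) u = fullLap f (z + u) := by
  obtain ⟨z1, z2⟩ := z
  obtain ⟨u1, u2⟩ := u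
  simp only [fullLap, Prod.mk_add_mk, add_assoc, add_sub_assoc]

lemma fullLap_sum_mul (s : Finset (ℤ × ℤ)) (c : ℤ × ℤ → ℂ) (h : ℤ × ℤ → ℤ × ℤ → ℂ)
    (x : ℤ × ℤ) :
    fullLap (fun p => ∑ v ∈ s, c v * h v p) x = ∑ v ∈ s, c v * fullLap (h v) x := by
  simp only [fullLap, mul_sum, ← sum_add_distrib, ← sum_sub_distrib]
  exact sum_congr rfl fun v _ => by ring

lemma fullLap_eq_zero {f : ℤ × ℤ → ℂ} {u : ℤ × ℤ} (hu : f u = 0)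
    (hadj : ∀ v, LatticeAdj u v → f v = 0) : fullLap f u = 0 := by
  simp only [latticeAdj_iff, mem_insert, mem_singleton] at hadj
  simp [fullLap, hu, hadj]

lemma finsum_fullLap_mul {f : ℤ × ℤ → ℂ} (hf : HasFiniteSupport f) (g : ℤ × ℤ → ℂ) :
    ∑ᶠ u, fullLap f u * g u = ∑ᶠ u, f u * fullLap g u := by
  have hshift (d : ℤ × ℤ) : ∑ᶠ u, f (u + d) * g u = ∑ᶠ u, f u * g (u - d) := by
    rw [← finsum_comp_equiv (Equiv.subRight d)]; simp
  have hshift' (d : ℤ × ℤ) : ∑ᶠ u, f (u - d) * g u = ∑ᶠ u, f u * g (u + d) := by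
    rw [← finsum_comp_equiv (Equiv.addRight d)]; simp
  simp only [fullLap_eq_shifts, sub_mul, add_mul, mul_add, mul_sub, mul_assoc,
    mul_left_comm _ (4 : ℂ)]
  rw [finsum_sub_distrib, finsum_add_distrib, finsum_add_distrib, finsum_add_distrib,
    finsum_sub_distrib, finsum_add_distrib, finsum_add_distrib, finsum_add_distrib,
    hshift, hshift, hshift', hshift', ← mul_finsum]
  · ring
  all_goals fun_prop (disch := first | exact add_left_injective _ | exact sub_left_injective)

lemma nonpos_of_mean_value {D : Finset (ℤ × ℤ)} {V : ℤ × ℤ → ℝ} (hV : ∀ p ∉ D, V p = 0)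
    (hmean : ∀ p ∈ D, V (p.1 + 1, p.2) + V (p.1 - 1, p.2) + V (p.1, p.2 + 1) + V (p.1, p.2 - 1) =
      4 * V p)
    (p : ℤ × ℤ) : V p ≤ 0 := by
  by_contra! hp
  have hpD : p ∈ D := by_contra fun h => hp.ne' (hV p h)
  obtain ⟨x, hxD, hxmax⟩ := D.exists_max_image V ⟨p, hpD⟩
  have hle (q : ℤ × ℤ) : V q ≤ V x := by
    by_cases hq : q ∈ D
    · exact hxmax q hq
    · linarith [hV q hq, hxmax p hpD]
  -- among the maximisers, the rightmost one has a maximiser as its right neighbour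
  obtain ⟨y, hy, hymax⟩ := (D.filter (V · = V x)).exists_max_image Prod.fst ⟨x, by simp [hxD]⟩
  rw [mem_filter] at hy
  have hright : V (y.1 + 1, y.2) = V x := by
    linarith [hmean y hy.1, hle (y.1 + 1, y.2), hle (y.1 - 1, y.2), hle (y.1, y.2 + 1),
      hle (y.1, y.2 - 1)]
  have hrightD : (y.1 + 1, y.2) ∈ D :=
    by_contra fun h => by linarith [hV _ h, hxmax p hpD]
  simpa using hymax _ (mem_filter.2 ⟨hrightD, hright⟩)

lemma eq_zero_of_fullLap_eq_zero {D : Finset (ℤ × ℤ)} {f : ℤ × ℤ → ℂ} (hf : ∀ p ∉ D, f p = 0)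
    (hlap : ∀ p ∈ D, fullLap f p = 0) : f = 0 := by
  have hnonpos (ℓ : ℂ →ₗ[ℝ] ℝ) (p : ℤ × ℤ) : ℓ (f p) ≤ 0 := by
    refine nonpos_of_mean_value (D := D) (V := fun q => ℓ (f q)) (fun q hq => by simp [hf q hq])
      (fun q hq => ?_) p
    have := congrArg ℓ (hlap q hq)
    simp only [fullLap, map_sub, map_add, map_zero] at this
    rw [show (4 : ℂ) * f q = (4 : ℝ) • f q by simp [Complex.real_smul], map_smul,
      smul_eq_mul] at this
    linarith
  funext p
  have hre : (f p).re = 0 :=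
    le_antisymm (hnonpos Complex.reLm p) (by simpa using hnonpos (-Complex.reLm) p)
  have him : (f p).im = 0 :=
    le_antisymm (hnonpos Complex.imLm p) (by simpa using hnonpos (-Complex.imLm) p)
  exact Complex.ext hre him

lemma dirichletLapMatrix_mulVec {D : Finset (ℤ × ℤ)} {f : ℤ × ℤ → ℂ} (hf : ∀ p ∉ D, f p = 0)
    (x : D) : (dirichletLapMatrix D *ᵥ fun y : D => f y) x = fullLap f x := by
  have hsum : ∑ y : D, (if LatticeAdj (x : ℤ × ℤ) y then f y else 0) =
      ∑ y ∈ D, (if LatticeAdj (x : ℤ × ℤ) y then f y else 0) :=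
    sum_coe_sort D fun y => if LatticeAdj (x : ℤ × ℤ) y then f y else 0
  simp only [Matrix.mulVec, dotProduct, dirichletLapMatrix, Matrix.of_apply, sub_mul, ite_mul,
    one_mul, zero_mul, sum_sub_distrib, sum_ite_eq, mem_univ, if_true, hsum, sum_ite_latticeAdj hf,
    fullLap]

lemma isUnit_det_dirichletLapMatrix (D : Finset (ℤ × ℤ)) : IsUnit (dirichletLapMatrix D).det := by
  rw [isUnit_iff_ne_zero, Ne, ← exists_mulVec_eq_zero_iff]
  rintro ⟨v, hv0, hv⟩
  let f : ℤ × ℤ → ℂ := fun p => if h : p ∈ D then v ⟨p, h⟩ else 0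
  have hf : ∀ p ∉ D, f p = 0 := fun p hp => dif_neg hp
  have hfv : (fun y : D => f y) = v := funext fun y => dif_pos y.2
  have hlap (p : ℤ × ℤ) (hp : p ∈ D) : fullLap f p = 0 := by
    rw [← dirichletLapMatrix_mulVec hf ⟨p, hp⟩, hfv, hv, Pi.zero_apply]
  apply hv0
  rw [← hfv, eq_zero_of_fullLap_eq_zero hf hlap]
  rfl

lemma dirichletLapMatrix_isSymm (D : Finset (ℤ × ℤ)) : (dirichletLapMatrix D).IsSymm := by
  ext x y
  simp only [transpose_apply, dirichletLapMatrix, of_apply, latticeAdj_comm, eq_comm]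

lemma dirichletGreen_comm (D : Finset (ℤ × ℤ)) (x y : ℤ × ℤ) :
    dirichletGreen D x y = dirichletGreen D y x := by
  unfold dirichletGreen
  split_ifs with hx hy hy <;> try rfl
  rw [neg_apply, neg_apply, (dirichletLapMatrix_isSymm D).inv.apply]

lemma dirichletGreen_of_notMem_left {D : Finset (ℤ × ℤ)} {x : ℤ × ℤ} (hx : x ∉ D) (y : ℤ × ℤ) :
    dirichletGreen D x y = 0 :=
  dif_neg hx

lemma fullLap_dirichletGreen_left {D : Finset (ℤ × ℤ)} {x : ℤ × ℤ} (hx : x ∈ D) (w : ℤ × ℤ) :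
    fullLap (fun p => dirichletGreen D p w) x = if x = w then -1 else 0 := by
  by_cases hw : w ∈ D
  · have hcol :
        (fun y : D => dirichletGreen D y w) = fun y => (-(dirichletLapMatrix D)⁻¹) y ⟨w, hw⟩ :=
      funext fun y => by rw [dirichletGreen, dif_pos y.2, dif_pos hw]
    rw [← dirichletLapMatrix_mulVec (fun p hp => dirichletGreen_of_notMem_left hp w) ⟨x, hx⟩, hcol]
    change (dirichletLapMatrix D * -(dirichletLapMatrix D)⁻¹) ⟨x, hx⟩ ⟨w, hw⟩ = _
    rw [Matrix.mul_neg, mul_nonsing_inv _ (isUnit_det_dirichletLapMatrix D), neg_apply, one_apply]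
    split_ifs <;> simp_all
  · have hxw : x ≠ w := fun h => hw (h ▸ hx)
    simp [dirichletGreen, hw, hxw, fullLap]

lemma fullLap_dirichletGreen_right {D : Finset (ℤ × ℤ)} {x : ℤ × ℤ} (hx : x ∈ D) (u : ℤ × ℤ) :
    fullLap (dirichletGreen D u) x = if x = u then -1 else 0 := by
  rw [← fullLap_dirichletGreen_left hx u]
  exact congrArg₂ fullLap (funext (dirichletGreen_comm D u)) rfl

lemma latticeNorm_eq_norm (u : ℤ × ℤ) : latticeNorm u = ‖(u.1 + u.2 * Complex.I : ℂ)‖ := by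
  rw [latticeNorm, ← Complex.norm_add_mul_I]
  push_cast
  rfl

lemma latticeNorm_add_le (u v : ℤ × ℤ) : latticeNorm (u + v) ≤ latticeNorm u + latticeNorm v := by
  simp only [latticeNorm_eq_norm, Prod.fst_add, Prod.snd_add, Int.cast_add]
  rw [show (u.1 + v.1 + (u.2 + v.2) * Complex.I : ℂ) =
    u.1 + u.2 * Complex.I + (v.1 + v.2 * Complex.I) by ring]
  exact norm_add_le _ _

lemma latticeNorm_le_of_adj {u v : ℤ × ℤ} (h : LatticeAdj u v) :
    latticeNorm u ≤ latticeNorm v + 1 := by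
  have hstep : latticeNorm (u - v) = 1 := by
    rw [latticeNorm, Real.sqrt_eq_one]
    exact_mod_cast h
  simpa [hstep, add_comm] using latticeNorm_add_le v (u - v)

lemma exists_finset_ball (r : ℝ) : ∃ D : Finset (ℤ × ℤ), ∀ u, latticeNorm u ≤ r → u ∈ D := by
  refine ⟨Icc (-⌈r⌉, -⌈r⌉) (⌈r⌉, ⌈r⌉), fun u hu => ?_⟩
  have h1 : |(u.1 : ℝ)| ≤ r := (Real.abs_le_sqrt (by nlinarith)).trans hu
  have h2 : |(u.2 : ℝ)| ≤ r := (Real.abs_le_sqrt (by nlinarith)).trans hu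
  rw [abs_le] at h1 h2
  have := Int.le_ceil r
  simp only [mem_Icc, Prod.le_def]
  refine ⟨⟨?_, ?_⟩, ?_, ?_⟩ <;> rw [← Int.cast_le (R := ℝ)] <;> push_cast <;> linarith

lemma latticeNorm_le_of_fullLap_ne_zero {f : ℤ × ℤ → ℂ} {r : ℝ}
    (hf : ∀ v, f v ≠ 0 → latticeNorm v ≤ r) {u : ℤ × ℤ} (hu : fullLap f u ≠ 0) :
    latticeNorm u ≤ r + 1 := by
  by_contra! hur
  refine hu (fullLap_eq_zero ?_ fun v hv => ?_) <;> by_contra hne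
  · linarith [hf u hne]
  · linarith [hf v hne, latticeNorm_le_of_adj hv]

lemma finsum_fullLap_mul_dirichletGreen_eq_zero {D : Finset (ℤ × ℤ)} {f : ℤ × ℤ → ℂ}
    (hf : HasFiniteSupport f) {z w : ℤ × ℤ} (hsupp : ∀ v, f v ≠ 0 → z + v ∈ D ∧ z + v ≠ w) :
    ∑ᶠ u, fullLap f u * dirichletGreen D (z + u) w = 0 := by
  rw [finsum_fullLap_mul hf]
  refine finsum_eq_zero_of_forall_eq_zero fun v => ?_
  by_cases hv : f v = 0
  · rw [hv, zero_mul]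
  obtain ⟨hvD, hvw⟩ := hsupp v hv
  rw [fullLap_comp_add_left (fun p => dirichletGreen D p w), fullLap_dirichletGreen_left hvD,
    if_neg hvw, mul_zero]

lemma exists_eq_fullLap_of_sum_mul_dirichletGreen_eq_zero {a : ℤ × ℤ →₀ ℂ} {R : ℝ}
    {D : Finset (ℤ × ℤ)}
    (hsupp : ∀ u, a u ≠ 0 → latticeNorm u ≤ R) (hD : ∀ u, latticeNorm u ≤ R + 1 → u ∈ D)
    (hvanish : ∀ w ∈ D, R < latticeNorm w → ∑ u ∈ a.support, a u * dirichletGreen D u w = 0) :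
    ∃ α : ℤ × ℤ →₀ ℂ, ∀ u, a u = fullLap α u := by
  have hGreen (u : ℤ × ℤ) {p : ℤ × ℤ} (hp : p ∉ D) : dirichletGreen D u p = 0 := by
    rw [dirichletGreen_comm, dirichletGreen_of_notMem_left hp]
  let α : ℤ × ℤ →₀ ℂ := Finsupp.onFinset D (fun p => ∑ u ∈ a.support, -a u * dirichletGreen D u p)
    fun p hp => by_contra fun h => hp (by simp [hGreen _ h])
  have hα (p : ℤ × ℤ) (hp : R < latticeNorm p) : α p = 0 := by
    by_cases hpD : p ∈ D
    · simp [α, neg_mul, sum_neg_distrib, hvanish p hpD hp]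
    · simp [α, hGreen _ hpD]
  refine ⟨α, fun x => ?_⟩
  by_cases hx : x ∈ D
  · change a x = fullLap (fun p => ∑ u ∈ a.support, -a u * dirichletGreen D u p) x
    simp only [fullLap_sum_mul, fullLap_dirichletGreen_right hx, mul_ite, mul_neg, mul_one,
      mul_zero, neg_neg, sum_ite_eq, Finsupp.mem_support_iff]
    by_cases hax : a x = 0 <;> simp [hax]
  · have hax : a x = 0 := by_contra fun h => hx (hD x (by linarith [hsupp x h]))
    rw [hax, eq_comm]
    by_contra h
    exact hx (hD x (latticeNorm_le_of_fullLap_ne_zero (fun v hv => not_lt.1 (mt (hα v) hv)) h))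

/-- For a finitely supported `a : ℤ² → ℂ`, the following are equivalent:
(i) `a = Δ_♯ α` for some finitely supported `α`;
(ii) there is `R > 0` with `supp a ⊆ {|u| ≤ R}` such that for every `z ∈ ℤ²`, every finite
`D ⊂ ℤ²` containing `{z + u : |u| ≤ R}` and every `w ∈ D` with `|w − z| > R`, one has
`Σ_u a(u) · G_D(z + u, w) = 0`. -/
theorem null_linear_field_iff (a : (ℤ × ℤ) →₀ ℂ) :
    (∃ α : (ℤ × ℤ) →₀ ℂ, ∀ u : ℤ × ℤ, a u = fullLap (⇑α) u) ↔
      (∃ R : ℝ, 0 < R ∧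
        (∀ u : ℤ × ℤ, a u ≠ 0 → latticeNorm u ≤ R) ∧
        ∀ z : ℤ × ℤ, ∀ D : Finset (ℤ × ℤ),
          (∀ u : ℤ × ℤ, latticeNorm u ≤ R → z + u ∈ D) →
          ∀ w ∈ D, R < latticeNorm (w - z) →
            ∑ u ∈ a.support, a u * dirichletGreen D (z + u) w = 0) := by
  constructor
  · rintro ⟨α, hα⟩
    obtain ⟨r, hr⟩ := (α.support.image latticeNorm).bddAbove
    have hαr (v : ℤ × ℤ) (hv : α v ≠ 0) : latticeNorm v ≤ max r 0 :=
      (hr (mem_image_of_mem _ (Finsupp.mem_support_iff.2 hv))).trans (le_max_left _ _)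
    refine ⟨max r 0 + 1, by positivity,
      fun u hu => latticeNorm_le_of_fullLap_ne_zero hαr (hα u ▸ hu), fun z D hD w hw hzw => ?_⟩
    rw [← finsum_eq_sum_of_support_subset _ fun u hu =>
      mem_coe.2 (Finsupp.mem_support_iff.2 (left_ne_zero_of_mul (mem_support.1 hu)))]
    simp only [hα]
    refine finsum_fullLap_mul_dirichletGreen_eq_zero α.hasFiniteSupport fun v hv =>
      ⟨hD v (by linarith [hαr v hv]), fun h => ?_⟩
    rw [← h, add_sub_cancel_left] at hzw
    linarith [hαr v hv]
  · rintro ⟨R, -, hsupp, hvanish⟩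
    obtain ⟨D, hD⟩ := exists_finset_ball (R + 1)
    refine exists_eq_fullLap_of_sum_mul_dirichletGreen_eq_zero hsupp hD fun w hw hRw => ?_
    have hD₀ (u : ℤ × ℤ) (hu : latticeNorm u ≤ R) : 0 + u ∈ D := by
      simpa using hD u (by linarith)
    simpa using hvanish 0 D hD₀ w hw (by simpa using hRw)
end

section
/- Let A be an invertible n×n matrix over ℂ, W a subset of the index set {1,…,n}, P := Σ_{w ∈ W} E_{ww}, and G := −A^{−1}, and assume det(I_W + G_{W,W}) ≠ 0. Then A − P is invertible and, for all indices x, y ∈ {1,…,n}, −((A − P)^{−1})_{x,y} = det(M(x,y)) / det(I_W + G_{W,W}), where M(x,y) is the square matrix indexed by {∗} ⊔ W with entries M_{∗,∗} = G_{x,y}, M_{∗,w} = G_{x,w}, M_{w,∗} = G_{w,y}, and M_{w,w'} = δ_{w,w'} + G_{w,w'} for w, w' ∈ W; equivalently, −((A − P)^{−1})_{x,y} = G_{x,y} − Σ_{w,w' ∈ W} G_{x,w} ((I_W + G_{W,W})^{−1})_{w,w'} G_{w',y}. (This identity expresses the Green's function of the sandpile Laplacian perturbed by dissipation at the sites W as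 the ratio of fermionic correlation functions ⟨ξ(x)θ(y)D(w₁)⋯D(w_m)⟩ / ⟨D(w₁)⋯D(w_m)⟩.) -/
open scoped Matrix

/-- Let `A` be an invertible `n × n` complex matrix, `W` a subset of the
index set, `P := Σ_{w ∈ W} E_{ww}`, `G := -A⁻¹`, and assume `det (I_W + G_{W,W}) ≠ 0`.
Then `A - P` is invertible and, for all indices `x y`,
`-((A - P)⁻¹)_{x,y} = det (M x y) / det (I_W + G_{W,W})`, where `M x y` is the matrix
indexed by `{∗} ⊔ W` with entries `M_{∗,∗} = G_{x,y}`, `M_{∗,w} = G_{x,w}`,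
`M_{w,∗} = G_{w,y}` and `M_{w,w'} = δ_{w,w'} + G_{w,w'}`; equivalently,
`-((A - P)⁻¹)_{x,y} = G_{x,y} - Σ_{w,w' ∈ W} G_{x,w} ((I_W + G_{W,W})⁻¹)_{w,w'} G_{w',y}`. -/
theorem neg_inv_sub_proj_entry_eq
    (n : ℕ) (A : Matrix (Fin n) (Fin n) ℂ) (hA : IsUnit A.det)
    (W : Finset (Fin n))
    (P : Matrix (Fin n) (Fin n) ℂ)
    (hP : P = Matrix.of fun i j => if i = j ∧ i ∈ W then (1 : ℂ) else 0)
    (G : Matrix (Fin n) (Fin n) ℂ) (hG : G = -A⁻¹)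
    (D : Matrix W W ℂ)
    (hD : D = (1 : Matrix W W ℂ) +
        G.submatrix (fun w : W => (w : Fin n)) (fun w : W => (w : Fin n)))
    (hdet : D.det ≠ 0) :
    IsUnit (A - P).det ∧
      ∀ x y : Fin n,
        (-((A - P)⁻¹ x y) =
            (Matrix.fromBlocks
                (Matrix.of fun _ _ : Unit => G x y)
                (Matrix.of fun (_ : Unit) (w : W) => G x (w : Fin n))
                (Matrix.of fun (w : W) (_ : Unit) => G (w : Fin n) y)
                D).det / D.det) ∧
          (-((A - P)⁻¹ x y) =
            G x y - ∑ w : W, ∑ w' : W,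
              G x (w : Fin n) * (D⁻¹ w w') * G (w' : Fin n) y) := by
  classical
  set U : Matrix (Fin n) W ℂ :=
    Matrix.of (fun i (w : W) => if i = (w : Fin n) then (1 : ℂ) else 0) with hU
  set V : Matrix (Fin n) W ℂ := G * U with hV
  have hVe : ∀ (x : Fin n) (w : W), V x w = G x (w : Fin n) := by
    intro x w
    simp [hV, hU, Matrix.mul_apply]
  have hUGe : ∀ (w : W) (y : Fin n), (Uᵀ * G) w y = G (w : Fin n) y := by
    intro w y
    simp [hU, Matrix.mul_apply, Matrix.transpose_apply]
  have hPU : P = U * Uᵀ := by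
    ext i j
    simp only [hP, Matrix.of_apply, Matrix.mul_apply, Matrix.transpose_apply, hU]
    by_cases hij : i = j
    · subst hij
      by_cases hi : i ∈ W
      · rw [if_pos ⟨rfl, hi⟩]
        rw [Fintype.sum_eq_single (⟨i, hi⟩ : W)]
        · simp
        · intro b hb
          have : i ≠ (b : Fin n) := fun h => hb (Subtype.ext h.symm)
          simp [this]
      · rw [if_neg (by tauto)]
        refine (Finset.sum_eq_zero ?_).symm
        intro w _
        have : i ≠ (w : Fin n) := fun h => hi (h ▸ w.2)
        simp [this]
    · rw [if_neg (by tauto)]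
      refine (Finset.sum_eq_zero ?_).symm
      intro w _
      by_cases h1 : i = (w : Fin n)
      · have : j ≠ (w : Fin n) := fun h => hij (h1.trans h.symm)
        simp [this]
      · simp [h1]
  have hDV : D = 1 + Uᵀ * V := by
    rw [hD]
    congr 1
    ext w w'
    rw [hV, ← Matrix.mul_assoc]
    simp only [Matrix.mul_apply, hUGe, hU, Matrix.of_apply, Matrix.submatrix_apply]
    simp
  set B : Matrix (Fin n) (Fin n) ℂ := 1 + V * Uᵀ with hB
  have hAinv : A * A⁻¹ = 1 := A.mul_nonsing_inv hA
  have hAB : A - P = A * B := by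
    rw [hB, hPU, hV, hG, Matrix.mul_add, Matrix.mul_one, ← Matrix.mul_assoc,
      ← Matrix.mul_assoc, Matrix.mul_neg, hAinv]
    simp [sub_eq_add_neg, Matrix.neg_mul]
  have hdetB : B.det = D.det := by
    rw [hB, Matrix.det_one_add_mul_comm, ← hDV]
  have hUnit : IsUnit (A - P).det := by
    rw [hAB, Matrix.det_mul, hdetB]
    exact hA.mul (isUnit_iff_ne_zero.mpr hdet)
  refine ⟨hUnit, ?_⟩
  have hDD : D * D⁻¹ = 1 := D.mul_nonsing_inv (isUnit_iff_ne_zero.mpr hdet)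
  have hkey : V * Uᵀ * (V * D⁻¹ * Uᵀ) = V * Uᵀ - V * D⁻¹ * Uᵀ := by
    have h1 : (D - 1) * D⁻¹ = 1 - D⁻¹ := by
      rw [Matrix.sub_mul, hDD, Matrix.one_mul]
    have h2 : Uᵀ * V = D - 1 := by rw [hDV, add_sub_cancel_left]
    calc V * Uᵀ * (V * D⁻¹ * Uᵀ) = V * ((Uᵀ * V) * D⁻¹) * Uᵀ := by
          simp only [Matrix.mul_assoc]
      _ = V * (1 - D⁻¹) * Uᵀ := by rw [h2, h1]
      _ = V * Uᵀ - V * D⁻¹ * Uᵀ := by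
          rw [Matrix.mul_sub, Matrix.mul_one, Matrix.sub_mul]
  have hBX : B * (1 - V * D⁻¹ * Uᵀ) = 1 := by
    rw [hB, Matrix.mul_sub, Matrix.mul_one, Matrix.add_mul, Matrix.one_mul, hkey]
    abel
  have hBinv : B⁻¹ = 1 - V * D⁻¹ * Uᵀ := Matrix.inv_eq_right_inv hBX
  have hmain : -((A - P)⁻¹) = G - V * D⁻¹ * (Uᵀ * G) := by
    have h3 : (A - P)⁻¹ = B⁻¹ * A⁻¹ := by rw [hAB, Matrix.mul_inv_rev]
    rw [h3, hBinv, hG, Matrix.sub_mul, Matrix.one_mul, neg_sub,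
      Matrix.mul_neg, Matrix.mul_neg, sub_neg_eq_add]
    simp only [Matrix.mul_assoc]
    abel
  have hsum : ∀ x y : Fin n, (V * D⁻¹ * (Uᵀ * G)) x y =
      ∑ w : W, ∑ w' : W, G x (w : Fin n) * (D⁻¹ w w') * G (w' : Fin n) y := by
    intro x y
    simp only [Matrix.mul_apply, hUGe]
    simp only [Finset.sum_mul, hVe]
    rw [Finset.sum_comm]
  have hexp : ∀ x y : Fin n, -((A - P)⁻¹ x y) =
      G x y - ∑ w : W, ∑ w' : W, G x (w : Fin n) * (D⁻¹ w w') * G (w' : Fin n) y := by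
    intro x y
    have := congrFun (congrFun hmain x) y
    rw [Matrix.neg_apply, Matrix.sub_apply, hsum] at this
    exact this
  intro x y
  refine ⟨?_, hexp x y⟩
  haveI := D.invertibleOfIsUnitDet (isUnit_iff_ne_zero.mpr hdet)
  rw [Matrix.det_fromBlocks₂₂, Matrix.invOf_eq_nonsing_inv,
    mul_div_cancel_left₀ _ hdet, Matrix.det_unique, hexp x y]
  congr 1
  simp only [Matrix.mul_apply, Matrix.of_apply, Finset.sum_mul]
  rw [Finset.sum_comm]
end
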